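/- arXiv:1407.2380 — 2 statements merged into one kernel-verified Lean document; each statement's English description precedes it below -/
import Mathlib

section
/- Let b_1,…,b_d ≥ 2 be pairwise coprime integers. Then there exists a constant C > 0 (depending on b_1,…,b_d) such that the discrepancy D_N of the Halton sequence in bases b_1,…,b_d satisfies D_N ≤ C · (log N)^d / N for all N ≥ 2; that is, every Halton sequence is a low-discrepancy sequence. -/
/-!
By inclusion–exclusion over the `2 ^ d` corners of a box it suffices to count the points in
anchored boxes `∏ i, [0, w i)`, and rounding each `w i` down and up to a multiple of `b i ^ (-L)`
with `N ≤ b i ^ L` changes that count by at most `d`. In base `b`, the interval `[0, a / b ^ L)`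
is a disjoint union of at most `b * L + 1` elementary intervals `[c' / b ^ k, (c' + 1) / b ^ k)`,
and `radInv b` maps each residue class modulo `b ^ k` onto exactly one of them. So a `b`-adic
anchored box is the union of at most `∏ i, (b i * L + 1)` intersections of residue classes modulo
the `b i ^ k i`; as the bases are coprime, each is one residue class modulo their product by the
Chinese remainder theorem, whose count among `n < N` is off by at most one. Taking
`L = log₂ N + 1` gives `N * D_N = O((log N) ^ d)`.
-/
open Real

/-- The discrepancy of the first `N` points of a sequence `z` in `[0,1)^ι`. -/
noncomputable def disc {ι : Type*} [Fintype ι] (z : ℕ → ι → ℝ) (N : ℕ) : ℝ :=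
  sSup { r : ℝ | ∃ u v : ι → ℝ,
    (∀ i, 0 ≤ u i ∧ u i ≤ v i ∧ v i ≤ 1) ∧
    r = |(Nat.card {n : ℕ // n < N ∧ ∀ i, u i ≤ z n i ∧ z n i < v i} : ℝ) / N
          - ∏ i, (v i - u i)| }

/-- The radical inverse function in base `b`. -/
noncomputable def radInv (b n : ℕ) : ℝ :=
  ∑ i ∈ Finset.range (Nat.digits b n).length,
    (((Nat.digits b n).getD i 0 : ℕ) : ℝ) / (b : ℝ) ^ (i + 1)

open Finset Function

section RadicalInverse

variable {b : ℕ}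

lemma radInv_zero (b : ℕ) : radInv b 0 = 0 := by
  simp [radInv]

lemma radInv_nonneg (b n : ℕ) : 0 ≤ radInv b n :=
  sum_nonneg fun _ _ => by positivity

lemma radInv_eq (hb : 2 ≤ b) (n : ℕ) :
    radInv b n = ((n % b : ℕ) + radInv b (n / b)) / b := by
  rcases eq_or_ne n 0 with rfl | hn
  · simp [radInv_zero]
  rw [radInv, Nat.digits_def' hb (Nat.pos_of_ne_zero hn), List.length_cons, sum_range_succ',
    radInv, add_div, sum_div, add_comm]
  simp only [List.getD_cons_succ, List.getD_cons_zero, pow_succ, div_div, zero_add, pow_zero,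
    one_mul]

lemma radInv_lt_one (hb : 2 ≤ b) (n : ℕ) : radInv b n < 1 := by
  induction n using Nat.strong_induction_on with
  | _ n ih =>
    rcases eq_or_ne n 0 with rfl | hn
    · simp [radInv_zero]
    have hdigit : ((n % b : ℕ) : ℝ) + 1 ≤ b := by exact_mod_cast Nat.mod_lt n (by omega)
    have htail := ih (n / b) (Nat.div_lt_self (Nat.pos_of_ne_zero hn) hb)
    rw [radInv_eq hb, div_lt_one (by positivity)]
    linarith

lemma radInv_lt_iff (hb : 2 ≤ b) {q : ℕ} {x : ℝ} (hx₀ : 0 ≤ x) (hx₁ : x ≤ 1) (n : ℕ) :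
    radInv b n < (q + x) / b ↔ n % b < q ∨ n % b = q ∧ radInv b (n / b) < x := by
  have htail₀ := radInv_nonneg b (n / b)
  have htail₁ := radInv_lt_one hb (n / b)
  rw [radInv_eq hb, div_lt_div_iff_of_pos_right (by positivity)]
  rcases lt_trichotomy (n % b) q with hlt | rfl | hgt
  · have : ((n % b : ℕ) : ℝ) + 1 ≤ q := by exact_mod_cast hlt
    simp only [hlt, true_or, iff_true]
    linarith
  · simp
  · have : (q : ℝ) + 1 ≤ (n % b : ℕ) := by exact_mod_cast hgt
    simp only [hgt.not_gt, hgt.ne', false_and, or_self, iff_false, not_lt]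
    linarith

end RadicalInverse

section AdicPieces

variable {b : ℕ}

/-- The decomposition of `[0, a / b ^ L)` into `b`-adic elementary intervals: the pair `(k, c)`
stands for the interval of length `b ^ (-k)` that `radInv b` maps the residue class
`n % b ^ k = c` onto. The recursion peels off the leading digit `a / b ^ L` of `a`, which
`radInv b` reads from the last digit `n % b` of `n`. -/
def adicPieces (b : ℕ) : ℕ → ℕ → Finset (ℕ × ℕ)
  | 0, a => if a = 0 then ∅ else {(0, 0)}
  | L + 1, a => (range (a / b ^ L)).image (fun t => (1, t)) ∪
      (adicPieces b L (a % b ^ L)).image fun p => (p.1 + 1, a / b ^ L + p.2 * b)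

lemma adicPieces_zero_right (b L : ℕ) : adicPieces b L 0 = ∅ := by
  induction L with
  | zero => simp [adicPieces]
  | succ L ih => simp [adicPieces, ih]

lemma div_pow_lt_or_eq_pow_succ (hb : 0 < b) {L a : ℕ} (ha : a ≤ b ^ (L + 1)) :
    a / b ^ L < b ∨ a = b ^ (L + 1) := by
  refine ha.lt_or_eq.imp_left fun h => ?_
  rwa [Nat.div_lt_iff_lt_mul (by positivity), ← pow_succ']

lemma snd_lt_pow_of_mem_adicPieces (hb : 0 < b) {L a : ℕ} (ha : a ≤ b ^ L) {p : ℕ × ℕ}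
    (hp : p ∈ adicPieces b L a) : p.2 < b ^ p.1 := by
  induction L generalizing a p with
  | zero =>
    unfold adicPieces at hp
    split_ifs at hp <;> simp_all
  | succ L ih =>
    simp only [adicPieces, mem_union, mem_image, mem_range] at hp
    rcases div_pow_lt_or_eq_pow_succ hb ha with hq | rfl
    · rcases hp with ⟨t, ht, rfl⟩ | ⟨p, hp, rfl⟩
      · simpa using ht.trans hq
      · have hc := ih (Nat.mod_lt a (by positivity)).le hp
        calc a / b ^ L + p.2 * b < (p.2 + 1) * b := by linarith
          _ ≤ b ^ (p.1 + 1) := by rw [pow_succ]; gcongr; exact hc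
    · have hs : b ^ (L + 1) % b ^ L = 0 := Nat.mod_eq_zero_of_dvd (pow_dvd_pow b L.le_succ)
      simp only [hs, adicPieces_zero_right, notMem_empty, false_and, exists_false, or_false] at hp
      obtain ⟨t, ht, rfl⟩ := hp
      simpa [pow_succ, Nat.mul_div_cancel_left _ (pow_pos hb L)] using ht

lemma card_adicPieces_le (hb : 0 < b) {L a : ℕ} (ha : a ≤ b ^ L) :
    #(adicPieces b L a) ≤ b * L + 1 := by
  induction L generalizing a with
  | zero =>
    unfold adicPieces
    split_ifs <;> simp
  | succ L ih =>
    have hq : a / b ^ L ≤ b := Nat.div_le_of_le_mul (by rwa [← pow_succ])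
    calc #(adicPieces b (L + 1) a)
        ≤ a / b ^ L + #(adicPieces b L (a % b ^ L)) :=
          (card_union_le _ _).trans (add_le_add (card_image_le.trans (card_range _).le)
            card_image_le)
      _ ≤ b + (b * L + 1) := add_le_add hq (ih (Nat.mod_lt a (by positivity)).le)
      _ = b * (L + 1) + 1 := by ring

lemma sum_adicPieces_succ {M : Type*} [AddCommMonoid M] (hb : 0 < b) (L a : ℕ)
    (F : ℕ × ℕ → M) :
    ∑ p ∈ adicPieces b (L + 1) a, F p =
      ∑ t ∈ range (a / b ^ L), F (1, t) +
        ∑ p ∈ adicPieces b L (a % b ^ L), F (p.1 + 1, a / b ^ L + p.2 * b) := by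
  have hdisj : Disjoint ((range (a / b ^ L)).image fun t => (1, t))
      ((adicPieces b L (a % b ^ L)).image fun p => (p.1 + 1, a / b ^ L + p.2 * b)) := by
    simp only [disjoint_left, mem_image, mem_range, not_exists, not_and]
    rintro _ ⟨t, ht, rfl⟩ p hp hpt
    have hc := snd_lt_pow_of_mem_adicPieces hb (Nat.mod_lt a (by positivity)).le hp
    simp only [Prod.mk.injEq] at hpt
    obtain ⟨hk, hc'⟩ := hpt
    rw [show p.1 = 0 by omega, pow_zero] at hc
    omega
  rw [adicPieces, sum_union hdisj, sum_image (by simp), sum_image]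
  rintro p - p' - h
  simp only [Prod.mk.injEq, add_left_inj, add_right_inj] at h
  exact Prod.ext h.1 (Nat.eq_of_mul_eq_mul_right hb h.2)

lemma sum_adicPieces_inv_pow (hb : 0 < b) {L a : ℕ} (ha : a ≤ b ^ L) :
    ∑ p ∈ adicPieces b L a, ((b : ℝ) ^ p.1)⁻¹ = a / (b : ℝ) ^ L := by
  induction L generalizing a with
  | zero =>
    obtain rfl | rfl : a = 0 ∨ a = 1 := by simp at ha; omega
    all_goals simp [adicPieces]
  | succ L ih =>
    have hdigits : ((b ^ L * (a / b ^ L) + a % b ^ L : ℕ) : ℝ) = a := by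
      rw [Nat.div_add_mod]
    rw [sum_adicPieces_succ hb]
    simp only [sum_const, card_range, nsmul_eq_mul, pow_succ, pow_zero, one_mul, mul_inv]
    rw [← sum_mul, ih (Nat.mod_lt a (by positivity)).le, ← hdigits]
    push_cast
    field_simp

lemma mod_pow_succ_eq_add_mul_iff (hb : 0 < b) {q : ℕ} (hq : q < b) (n k c : ℕ) :
    n % b ^ (k + 1) = q + c * b ↔ n % b = q ∧ n / b % b ^ k = c := by
  rw [pow_succ', Nat.mod_mul]
  constructor
  · intro h
    have hlast : n % b = q := by
      simpa [Nat.add_mul_mod_self_left, Nat.add_mul_mod_self_right, Nat.mod_eq_of_lt hq]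
        using congrArg (· % b) h
    refine ⟨hlast, Nat.eq_of_mul_eq_mul_left hb ?_⟩
    rw [hlast] at h
    linarith
  · rintro ⟨rfl, rfl⟩
    ring

lemma ite_radInv_lt_eq_sum_adicPieces (hb : 2 ≤ b) {L a : ℕ} (ha : a ≤ b ^ L) (n : ℕ) :
    (if radInv b n < a / (b : ℝ) ^ L then (1 : ℝ) else 0) =
      ∑ p ∈ adicPieces b L a, if n % b ^ p.1 = p.2 then 1 else 0 := by
  induction L generalizing a n with
  | zero =>
    obtain rfl | rfl : a = 0 ∨ a = 1 := by simp at ha; omega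
    · simp [adicPieces, (radInv_nonneg b n).not_gt]
    · rw [show adicPieces b 0 1 = {(0, 0)} by simp [adicPieces], sum_singleton]
      simp [radInv_lt_one hb n, Nat.mod_one]
  | succ L ih =>
    have hb₀ : 0 < b := by omega
    have hbL : 0 < b ^ L := by positivity
    rw [sum_adicPieces_succ hb₀]
    simp only [pow_one, sum_ite_eq, mem_range]
    rcases div_pow_lt_or_eq_pow_succ hb₀ ha with hq | rfl
    · set q := a / b ^ L
      set s := a % b ^ L
      have hs₁ : (s : ℝ) / b ^ L ≤ 1 := by
        rw [div_le_one (by positivity)]; exact_mod_cast (Nat.mod_lt a hbL).le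
      have hdigits : (a : ℝ) / b ^ (L + 1) = (q + s / b ^ L) / b := by
        rw [← Nat.div_add_mod a (b ^ L)]
        push_cast
        field_simp
        ring
      have htail (p : ℕ × ℕ) : n % b ^ (p.1 + 1) = q + p.2 * b ↔
          n % b = q ∧ n / b % b ^ p.1 = p.2 := mod_pow_succ_eq_add_mul_iff hb₀ hq n _ _
      simp only [hdigits, radInv_lt_iff hb (by positivity) hs₁]
      rw [sum_congr rfl fun p _ => if_congr (htail p) rfl rfl]
      by_cases hlast : n % b = q
      · simp only [hlast, lt_irrefl, true_and, false_or, if_false, zero_add]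
        exact ih (Nat.mod_lt a hbL).le (n / b)
      · simp [hlast]
    · have hs : b ^ (L + 1) % b ^ L = 0 := Nat.mod_eq_zero_of_dvd (pow_dvd_pow b L.le_succ)
      have hq : b ^ (L + 1) / b ^ L = b := by simp [pow_succ, Nat.mul_div_cancel_left _ hbL]
      rw [hs, hq, adicPieces_zero_right, sum_empty, add_zero]
      have hb' : (b : ℝ) ^ (L + 1) ≠ 0 := by positivity
      simp [Nat.mod_lt n hb₀, div_self hb', radInv_lt_one hb n]

end AdicPieces

lemma abs_sum_ite_modEq_sub_div_le_one {M : ℕ} (hM : 0 < M) (c N : ℕ) :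
    |∑ n ∈ range N, (if n ≡ c [MOD M] then (1 : ℝ) else 0) - N / M| ≤ 1 := by
  have hdiv : (N : ℝ) / M = (N / M : ℕ) + ((N % M : ℕ) : ℝ) / M := by
    conv_lhs => rw [← Nat.div_add_mod N M]
    push_cast
    field_simp
  have hfrac₀ : 0 ≤ ((N % M : ℕ) : ℝ) / M := by positivity
  have hfrac₁ : ((N % M : ℕ) : ℝ) / M < 1 :=
    (div_lt_one (by positivity)).2 (by exact_mod_cast Nat.mod_lt N hM)
  rw [sum_boole, ← Nat.count_eq_card_filter_range, Nat.count_modEq_card N hM c, hdiv, abs_le]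
  split_ifs <;> push_cast <;> constructor <;> linarith

lemma Nat.modEq_prod_iff_forall {ι : Type*} [Fintype ι] {m : ι → ℕ}
    (hm : Pairwise (Nat.Coprime on m)) {a b : ℕ} : a ≡ b [MOD ∏ i, m i] ↔ ∀ i, a ≡ b [MOD m i] := by
  simpa [prod_map_toList] using Nat.modEq_list_map_prod_iff (a := a) (b := b) (s := m)
    ((nodup_toList univ).pairwise_of_forall_ne fun i _ j _ h => hm h)

lemma abs_sum_prod_ite_modEq_sub_div_le_one {ι : Type*} [Fintype ι] {m : ι → ℕ}
    (hm : Pairwise (Nat.Coprime on m)) (hm₀ : ∀ i, 0 < m i) (c : ι → ℕ) (N : ℕ) :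
    |∑ n ∈ range N, ∏ i, (if n ≡ c i [MOD m i] then (1 : ℝ) else 0) - N / ∏ i, (m i : ℝ)| ≤ 1 := by
  obtain ⟨k, hk⟩ := Nat.chineseRemainderOfFinset c m univ (fun i _ => (hm₀ i).ne')
    fun i _ j _ h => hm h
  have hcrt (n : ℕ) : (∀ i, n ≡ c i [MOD m i]) ↔ n ≡ k [MOD ∏ i, m i] := by
    rw [Nat.modEq_prod_iff_forall hm]
    exact forall_congr' fun i => ⟨fun h => h.trans (hk i (mem_univ i)).symm,
      fun h => h.trans (hk i (mem_univ i))⟩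
  simp only [Fintype.prod_boole, hcrt, ← Nat.cast_prod]
  exact abs_sum_ite_modEq_sub_div_le_one (prod_pos fun i _ => hm₀ i) k N

lemma prod_sub_prod_le_sum_sub {ι R : Type*} [CommRing R] [LinearOrder R] [IsStrictOrderedRing R]
    (s : Finset ι) {f g : ι → R} (hg : ∀ i ∈ s, 0 ≤ g i) (hgf : ∀ i ∈ s, g i ≤ f i)
    (hf : ∀ i ∈ s, f i ≤ 1) : ∏ i ∈ s, f i - ∏ i ∈ s, g i ≤ ∑ i ∈ s, (f i - g i) := by
  classical
  induction s using Finset.induction_on with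
  | empty => simp
  | insert j s hj ih =>
    simp only [mem_insert, forall_eq_or_imp] at hg hgf hf
    rw [prod_insert hj, prod_insert hj, sum_insert hj]
    have hG₀ : 0 ≤ ∏ i ∈ s, g i := prod_nonneg hg.2
    have hGF : ∏ i ∈ s, g i ≤ ∏ i ∈ s, f i := prod_le_prod hg.2 hgf.2
    have hF₁ : ∏ i ∈ s, f i ≤ 1 := prod_le_one (fun i hi => (hg.2 i hi).trans (hgf.2 i hi)) hf.2
    -- `f j * F - g j * G = f j * (F - G) + (f j - g j) * G` with `f j ≤ 1` and `G ≤ 1`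
    nlinarith [ih hg.2 hgf.2 hf.2]

lemma prod_sub_eq_sum_powerset_piecewise {ι R : Type*} [Fintype ι] [DecidableEq ι] [CommRing R]
    (f g : ι → R) :
    ∏ i, (f i - g i) = ∑ t ∈ univ.powerset, (-1) ^ #t * ∏ i, t.piecewise g f i := by
  rw [prod_sub]
  refine sum_congr rfl fun t _ => ?_
  rw [prod_piecewise, univ_inter, mul_assoc, mul_comm (∏ i ∈ univ \ t, f i)]

section Discrepancy

variable {ι : Type*} [Fintype ι]

noncomputable def anchoredCount (z : ℕ → ι → ℝ) (N : ℕ) (w : ι → ℝ) : ℝ :=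
  ∑ n ∈ range N, ∏ i, if z n i < w i then 1 else 0

lemma anchoredCount_mono (z : ℕ → ι → ℝ) (N : ℕ) : Monotone (anchoredCount z N) :=
  fun _ _ hw => sum_le_sum fun _ _ => prod_le_prod (fun _ _ => by positivity) fun i _ => by
    split_ifs with h₁ h₂
    exacts [le_rfl, absurd (h₁.trans_le (hw i)) h₂, zero_le_one, le_rfl]

lemma abs_anchoredCount_sub_le_of_le_of_le {z : ℕ → ι → ℝ} {N : ℕ} {w lo hi : ι → ℝ} {E δ : ℝ}
    (hlo : ∀ i, 0 ≤ lo i ∧ lo i ≤ w i) (hhi : ∀ i, w i ≤ hi i ∧ hi i ≤ 1)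
    (hδ : ∀ i, hi i - lo i ≤ δ) (hElo : |anchoredCount z N lo - N * ∏ i, lo i| ≤ E)
    (hEhi : |anchoredCount z N hi - N * ∏ i, hi i| ≤ E) :
    |anchoredCount z N w - N * ∏ i, w i| ≤ E + N * (Fintype.card ι * δ) := by
  have hAlo := anchoredCount_mono z N fun i => (hlo i).2
  have hAhi := anchoredCount_mono z N fun i => (hhi i).1
  have hVlo : ∏ i, lo i ≤ ∏ i, w i := prod_le_prod (fun i _ => (hlo i).1) fun i _ => (hlo i).2
  have hVhi : ∏ i, w i ≤ ∏ i, hi i :=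
    prod_le_prod (fun i _ => (hlo i).1.trans (hlo i).2) fun i _ => (hhi i).1
  have hgap : ∏ i, hi i - ∏ i, lo i ≤ Fintype.card ι * δ :=
    calc ∏ i, hi i - ∏ i, lo i ≤ ∑ i, (hi i - lo i) :=
          prod_sub_prod_le_sum_sub _ (fun i _ => (hlo i).1)
            (fun i _ => (hlo i).2.trans (hhi i).1) fun i _ => (hhi i).2
      _ ≤ ∑ _i : ι, δ := sum_le_sum fun i _ => hδ i
      _ = Fintype.card ι * δ := by simp
  have hNgap := mul_le_mul_of_nonneg_left hgap (Nat.cast_nonneg N)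
  rw [abs_le] at hElo hEhi ⊢
  constructor <;> nlinarith [hElo.1, hEhi.2]

lemma abs_sum_ite_mem_box_sub_le {z : ℕ → ι → ℝ} {N : ℕ} {E : ℝ}
    (hE : ∀ w : ι → ℝ, (∀ i, 0 ≤ w i ∧ w i ≤ 1) → |anchoredCount z N w - N * ∏ i, w i| ≤ E)
    {u v : ι → ℝ} (huv : ∀ i, 0 ≤ u i ∧ u i ≤ v i ∧ v i ≤ 1) :
    |∑ n ∈ range N, (if ∀ i, u i ≤ z n i ∧ z n i < v i then (1 : ℝ) else 0) -
        N * ∏ i, (v i - u i)| ≤ 2 ^ Fintype.card ι * E := by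
  classical
  have hbox (n : ℕ) : (if ∀ i, u i ≤ z n i ∧ z n i < v i then (1 : ℝ) else 0) =
      ∏ i, ((if z n i < v i then 1 else 0) - if z n i < u i then 1 else 0) := by
    rw [← Fintype.prod_boole]
    refine prod_congr rfl fun i _ => ?_
    rcases lt_or_ge (z n i) (u i) with hu | hu
    · simp [hu, hu.trans_le (huv i).2.1, not_le.2 hu]
    · by_cases hv : z n i < v i <;> simp [hu, hv, not_lt.2 hu]
  have hcorner (n : ℕ) (t : Finset ι) :
      ∏ i, t.piecewise (fun i => if z n i < u i then (1 : ℝ) else 0)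
        (fun i => if z n i < v i then 1 else 0) i =
      ∏ i, if z n i < t.piecewise u v i then 1 else 0 :=
    prod_congr rfl fun i _ => by by_cases hi : i ∈ t <;> simp [hi]
  simp only [hbox, prod_sub_eq_sum_powerset_piecewise, hcorner]
  rw [sum_comm, mul_sum, ← sum_sub_distrib]
  calc _ ≤ ∑ t ∈ univ.powerset,
        |(-1) ^ #t * (anchoredCount z N (t.piecewise u v) - N * ∏ i, t.piecewise u v i)| := by
        refine (abs_sum_le_sum_abs _ _).trans_eq (sum_congr rfl fun t _ => ?_)
        rw [anchoredCount, ← mul_sum]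
        congr 1
        ring
    _ ≤ ∑ _t ∈ (univ : Finset ι).powerset, E := by
        refine sum_le_sum fun t _ => ?_
        rw [abs_mul, abs_pow, abs_neg, abs_one, one_pow, one_mul]
        refine hE _ fun i => ?_
        by_cases hi : i ∈ t <;> simp only [hi, piecewise_eq_of_mem, piecewise_eq_of_notMem,
          not_false_eq_true]
        exacts [⟨(huv i).1, (huv i).2.1.trans (huv i).2.2⟩,
          ⟨(huv i).1.trans (huv i).2.1, (huv i).2.2⟩]
    _ = 2 ^ Fintype.card ι * E := by simp

lemma disc_le_of_abs_sum_ite_mem_box_sub_le {z : ℕ → ι → ℝ} {N : ℕ} (hN : 0 < N) {E : ℝ}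
    (hE : ∀ u v : ι → ℝ, (∀ i, 0 ≤ u i ∧ u i ≤ v i ∧ v i ≤ 1) →
      |∑ n ∈ range N, (if ∀ i, u i ≤ z n i ∧ z n i < v i then (1 : ℝ) else 0) -
        N * ∏ i, (v i - u i)| ≤ E) :
    disc z N ≤ E / N := by
  have hE₀ : 0 ≤ E := (abs_nonneg _).trans (hE 0 0 fun _ => by simp)
  refine Real.sSup_le ?_ (by positivity)
  rintro r ⟨u, v, huv, rfl⟩
  have hcard : (Nat.card {n : ℕ // n < N ∧ ∀ i, u i ≤ z n i ∧ z n i < v i} : ℝ) =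
      ∑ n ∈ range N, if ∀ i, u i ≤ z n i ∧ z n i < v i then (1 : ℝ) else 0 := by
    rw [sum_boole, ← Nat.card_eq_finsetCard]
    exact congrArg _ (Nat.card_congr (Equiv.subtypeEquivRight fun n => by simp))
  have hN' : (0 : ℝ) < N := by exact_mod_cast hN
  rw [hcard, ← mul_div_cancel_left₀ (∏ i, (v i - u i)) hN'.ne', ← sub_div, abs_div,
    Nat.abs_cast]
  exact div_le_div_of_nonneg_right (hE u v huv) hN'.le

end Discrepancy

section Halton

variable {ι : Type*} [Fintype ι] {b : ι → ℕ}

noncomputable def halton (b : ι → ℕ) (n : ℕ) (i : ι) : ℝ := radInv (b i) n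

lemma abs_anchoredCount_halton_adic_sub_le (hb : ∀ i, 2 ≤ b i) (hcop : Pairwise (Nat.Coprime on b))
    (L : ℕ) {a : ι → ℕ} (ha : ∀ i, a i ≤ b i ^ L) (N : ℕ) :
    |anchoredCount (halton b) N (fun i => a i / (b i : ℝ) ^ L) - N * ∏ i, (a i / (b i : ℝ) ^ L)|
      ≤ ∏ i, ((b i : ℝ) * L + 1) := by
  classical
  set S : ι → Finset (ℕ × ℕ) := fun i => adicPieces (b i) L (a i)
  have hb₀ (i : ι) : 0 < b i := by linarith [hb i]
  have hcount : anchoredCount (halton b) N (fun i => a i / (b i : ℝ) ^ L) =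
      ∑ f ∈ Fintype.piFinset S, ∑ n ∈ range N,
        ∏ i, if n ≡ (f i).2 [MOD b i ^ (f i).1] then (1 : ℝ) else 0 := by
    rw [anchoredCount, sum_comm]
    refine sum_congr rfl fun n _ => ?_
    rw [← prod_univ_sum S fun i p => if n ≡ p.2 [MOD b i ^ p.1] then (1 : ℝ) else 0]
    refine prod_congr rfl fun i _ => ?_
    rw [halton, ite_radInv_lt_eq_sum_adicPieces (hb i) (ha i)]
    refine sum_congr rfl fun p hp => ?_
    simp only [Nat.ModEq, Nat.mod_eq_of_lt (snd_lt_pow_of_mem_adicPieces (hb₀ i) (ha i) hp)]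
  have hvolume : ∏ i, (a i / (b i : ℝ) ^ L) =
      ∑ f ∈ Fintype.piFinset S, (∏ i, ((b i ^ (f i).1 : ℕ) : ℝ))⁻¹ := by
    simp only [← sum_adicPieces_inv_pow (hb₀ _) (ha _), prod_univ_sum, ← prod_inv_distrib,
      Nat.cast_pow, S]
  rw [hcount, hvolume, mul_sum, ← sum_sub_distrib]
  calc _ ≤ ∑ _f ∈ Fintype.piFinset S, (1 : ℝ) := by
        refine (abs_sum_le_sum_abs _ _).trans (sum_le_sum fun f _ => ?_)
        rw [← div_eq_mul_inv]
        exact abs_sum_prod_ite_modEq_sub_div_le_one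
          (fun i j hij => (hcop hij).pow _ _) (fun i => pow_pos (hb₀ i) _) _ N
    _ = ∏ i, (#(S i) : ℝ) := by simp
    _ ≤ ∏ i, ((b i : ℝ) * L + 1) := prod_le_prod (fun _ _ => by positivity)
        fun i _ => by exact_mod_cast card_adicPieces_le (hb₀ i) (ha i)

lemma abs_anchoredCount_halton_sub_le (hb : ∀ i, 2 ≤ b i) (hcop : Pairwise (Nat.Coprime on b))
    {N L : ℕ} (hN : 0 < N) (hL : ∀ i, N ≤ b i ^ L) {w : ι → ℝ} (hw : ∀ i, 0 ≤ w i ∧ w i ≤ 1) :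
    |anchoredCount (halton b) N w - N * ∏ i, w i| ≤ ∏ i, ((b i : ℝ) * L + 1) + Fintype.card ι := by
  set B : ι → ℝ := fun i => (b i : ℝ) ^ L
  have hB (i : ι) : 0 < B i := pow_pos (Nat.cast_pos.2 (by linarith [hb i])) L
  have hNB (i : ι) : (N : ℝ) ≤ B i := by simp only [B]; exact_mod_cast hL i
  have hwB (i : ι) : w i * B i ≤ (b i ^ L : ℕ) := by
    push_cast; nlinarith [hw i, hB i]
  have hlo := abs_anchoredCount_halton_adic_sub_le hb hcop L
    (a := fun i => ⌊w i * B i⌋₊) (fun i => Nat.floor_le_of_le (hwB i)) N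
  have hhi := abs_anchoredCount_halton_adic_sub_le hb hcop L
    (a := fun i => ⌈w i * B i⌉₊) (fun i => Nat.ceil_le.2 (hwB i)) N
  have hsandwich := abs_anchoredCount_sub_le_of_le_of_le (w := w) (δ := 1 / N) ?_ ?_ ?_ hlo hhi
  · rwa [mul_one_div, mul_div_cancel₀ _ (by positivity)] at hsandwich
  · exact fun i => ⟨by positivity,
      (div_le_iff₀ (hB i)).2 (Nat.floor_le (mul_nonneg (hw i).1 (hB i).le))⟩
  · refine fun i => ⟨(le_div_iff₀ (hB i)).2 (Nat.le_ceil _), (div_le_one (hB i)).2 ?_⟩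
    exact (Nat.cast_le.2 (Nat.ceil_le.2 (hwB i))).trans_eq (by simp [B])
  · intro i
    calc (⌈w i * B i⌉₊ : ℝ) / B i - ⌊w i * B i⌋₊ / B i ≤ 1 / B i := by
          rw [← sub_div]
          gcongr
          have : (⌈w i * B i⌉₊ : ℝ) ≤ ⌊w i * B i⌋₊ + 1 := by
            exact_mod_cast Nat.ceil_le_floor_add_one (w i * B i)
          linarith
      _ ≤ 1 / N := one_div_le_one_div_of_le (by exact_mod_cast hN) (hNB i)

lemma disc_halton_le (hb : ∀ i, 2 ≤ b i) (hcop : Pairwise (Nat.Coprime on b)) {N L : ℕ}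
    (hN : 0 < N) (hL : ∀ i, N ≤ b i ^ L) :
    disc (halton b) N ≤
      2 ^ Fintype.card ι * (∏ i, ((b i : ℝ) * L + 1) + Fintype.card ι) / N :=
  disc_le_of_abs_sum_ite_mem_box_sub_le hN fun _ _ huv =>
    abs_sum_ite_mem_box_sub_le (fun _ hw => abs_anchoredCount_halton_sub_le hb hcop hN hL hw) huv

end Halton

lemma one_le_logb_two {N : ℕ} (hN : 2 ≤ N) : 1 ≤ Real.logb 2 N := by
  rw [Real.le_logb_iff_rpow_le one_lt_two (by positivity), Real.rpow_one]
  exact_mod_cast hN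

lemma mul_natLog_two_succ_add_one_le {b N : ℕ} (hb : 1 ≤ b) (hN : 2 ≤ N) :
    (b : ℝ) * (Nat.log 2 N + 1 : ℕ) + 1 ≤ 3 * b * Real.logb 2 N := by
  have hlog : (Nat.log 2 N : ℝ) ≤ Real.logb 2 N := by exact_mod_cast Real.natLog_le_logb N 2
  have hone := one_le_logb_two hN
  have hb' : (1 : ℝ) ≤ b := by exact_mod_cast hb
  push_cast
  nlinarith

theorem stmt14 (d : ℕ) (b : Fin d → ℕ) (hb : ∀ i, 2 ≤ b i)
    (hcop : ∀ i j, i ≠ j → Nat.Coprime (b i) (b j)) :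
    ∃ C > 0, ∀ N : ℕ, 2 ≤ N →
      disc (fun n j => radInv (b j) n) N ≤ C * Real.log N ^ d / N := by
  have hb₀ (i : Fin d) : (0 : ℝ) < b i := Nat.cast_pos.2 (by linarith [hb i])
  refine ⟨2 ^ d * (∏ i, (3 * (b i : ℝ)) + d) / Real.log 2 ^ d, ?_, fun N hN => ?_⟩
  · have := Real.log_pos one_lt_two
    have : 0 < ∏ i, (3 * (b i : ℝ)) := prod_pos fun i _ => mul_pos three_pos (hb₀ i)
    positivity
  set x := Real.logb 2 N
  have hL (i : Fin d) : N ≤ b i ^ (Nat.log 2 N + 1) :=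
    (Nat.lt_pow_succ_log_self one_lt_two N).le.trans (Nat.pow_le_pow_left (hb i) _)
  calc disc (fun n j => radInv (b j) n) N
      ≤ 2 ^ d * (∏ i, ((b i : ℝ) * (Nat.log 2 N + 1 : ℕ) + 1) + d) / N := by
        have := disc_halton_le hb hcop (by omega) hL
        rwa [Fintype.card_fin] at this
    _ ≤ 2 ^ d * (∏ i, (3 * (b i : ℝ) * x) + d * x ^ d) / N := by
        gcongr
        · exact mul_natLog_two_succ_add_one_le (by linarith [hb ‹_›]) hN
        · exact le_mul_of_one_le_right (by positivity) (one_le_pow₀ (one_le_logb_two hN))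
    _ = 2 ^ d * (∏ i, (3 * (b i : ℝ)) + d) / Real.log 2 ^ d * Real.log N ^ d / N := by
        rw [prod_mul_distrib, prod_const, card_univ, Fintype.card_fin,
          show x = Real.log N / Real.log 2 from Real.log_div_log.symm, div_pow]
        field_simp
end

section
/- Assume Moser's conjecture: there is a constant B such that for every N ∈ ℕ, N ≥ 2, there is an a ∈ ℕ with 1 ≤ a < N, gcd(a,N) = 1, such that the sum of all partial quotients in the continued fraction expansion of a/N is at most B·log N. Then there is a constant C(B) > 0 such that for every N ≥ 2 there exists a ∈ ℕ with 1 ≤ a < N, gcd(a,N) = 1, such that the discrepancy D_N of the 2-dimensional lattice point set ({n/N}, {n a/N})_{n=0,…,N−1} satisfies D_N ≤ C(B) · (log N) / N. -/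
open Real

/-- The value of the continued fraction `[0; c₁, c₂, …, c_r]` given by a list of
partial quotients: `cfVal [c₁, …, c_r] = 1/(c₁ + 1/(c₂ + ⋯ + 1/c_r))`. -/
def cfVal : List ℕ → ℚ
  | [] => 0
  | c :: l => 1 / (c + cfVal l)
/-!
Write `a / N = [0; c₁, …, c_r]` and `N = c₁ a + a'`, so that `a' / a = [0; c₂, …, c_r]`.
To count the `n < M` with `(β + n a) mod N < T`, group them by the block
`m = ⌊(β + n a) / N⌋`. In a block that lies inside the range, the admissible `n` form a window
of `⌊T / a⌋` or `⌊T / a⌋ + 1` consecutive integers, the larger size occurring exactly when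
`(β - m N) mod a = (β - m a') mod a` is below `T mod a`. So, up to the two boundary blocks, the
count is `L ⌊T / a⌋` plus a count of the same kind for the pair `(a, a')` with `L ≈ M a / N`.
Each step of the Euclidean algorithm thus costs `O(cᵢ)`, and the counting error for
`n ↦ (β + n a) mod N` is `O(c₁ + ⋯ + c_r)`. After rounding its corners to the grid `ℤ / N`,
a box is the difference of two such counts over a range of `n`, so `N D_N = O(c₁ + ⋯ + c_r)`,
and Moser's bound on the partial quotients gives the theorem.
-/

open Finset

namespace Int

lemma ediv_sub_ediv_sub {a : ℤ} (ha : 0 < a) (Z T : ℤ) :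
    Z / a - (Z - T) / a = T / a + if Z % a < T % a then 1 else 0 := by
  have hZ := emod_add_mul_ediv Z a
  have hT := emod_add_mul_ediv T a
  have := emod_lt_of_pos Z ha
  have := emod_lt_of_pos T ha
  have := emod_nonneg Z ha.ne'
  have := emod_nonneg T ha.ne'
  split_ifs
  · have := ((Int.ediv_emod_unique (a := Z - T) (r := Z % a - T % a + a)
      (q := Z / a - T / a - 1) ha).2 ⟨by linear_combination hZ - hT, by omega, by omega⟩).1
    omega
  · have := ((Int.ediv_emod_unique (a := Z - T) (r := Z % a - T % a)
      (q := Z / a - T / a) ha).2 ⟨by linear_combination hZ - hT, by omega, by omega⟩).1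
    omega

lemma abs_ediv_sub_ediv_sub_div_lt_one {N : ℤ} (hN : 0 < N) (x y : ℤ) :
    |((y / N - x / N : ℤ) : ℝ) - (y - x) / N| < 1 := by
  have hNR : (0 : ℝ) < N := by exact_mod_cast hN
  have hfloor : ∀ z : ℤ, ((z / N : ℤ) : ℝ) ≤ z / N ∧ (z : ℝ) / N < (z / N : ℤ) + 1 := fun z => by
    have : ((z % N : ℤ) : ℝ) + N * (z / N : ℤ) = z := by exact_mod_cast emod_add_mul_ediv z N
    have : (0 : ℝ) ≤ (z % N : ℤ) := by exact_mod_cast emod_nonneg z hN.ne'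
    have : ((z % N : ℤ) : ℝ) < N := by exact_mod_cast emod_lt_of_pos z hN
    rw [le_div_iff₀ hNR, div_lt_iff₀ hNR]
    constructor <;> linarith
  obtain ⟨hx, hx'⟩ := hfloor x
  obtain ⟨hy, hy'⟩ := hfloor y
  rw [abs_lt, sub_div]
  push_cast
  constructor <;> linarith

lemma abs_ceil_sub_ceil_sub_lt_one (x y : ℝ) : |((⌈y⌉ - ⌈x⌉ : ℤ) : ℝ) - (y - x)| < 1 := by
  have := le_ceil x
  have := le_ceil y
  have := ceil_lt_add_one x
  have := ceil_lt_add_one y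
  rw [abs_lt]
  push_cast
  constructor <;> linarith

end Int

lemma le_div_and_div_lt_iff_ceil {N : ℝ} (hN : 0 < N) (x : ℤ) (u v : ℝ) :
    u ≤ x / N ∧ x / N < v ↔ ⌈u * N⌉ ≤ x ∧ x < ⌈v * N⌉ := by
  rw [Int.ceil_le, Int.lt_ceil, le_div_iff₀ hN, div_lt_iff₀ hN]

lemma abs_mul_sub_mul_le {X Y x y : ℝ} (hX : |X - x| ≤ 1) (hY : |Y - y| ≤ 1) (hY0 : 0 ≤ Y)
    (hx0 : 0 ≤ x) : |X * Y - x * y| ≤ Y + x := by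
  calc |X * Y - x * y| = |(X - x) * Y + x * (Y - y)| := by ring_nf
    _ ≤ |X - x| * Y + x * |Y - y| := by
      rw [← abs_of_nonneg hY0, ← abs_of_nonneg hx0, ← abs_mul, ← abs_mul, abs_of_nonneg hY0,
        abs_of_nonneg hx0]
      exact abs_add_le _ _
    _ ≤ 1 * Y + x * 1 := by gcongr
    _ = Y + x := by ring

/-- The integers `n` with `0 ≤ Z + n a < T`, see `mem_window`. -/
noncomputable def window (a Z T : ℤ) : Finset ℤ := Ico (-(Z / a)) (-((Z - T) / a))

section window

variable {a : ℤ} (ha : 0 < a)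
include ha

lemma mem_window {Z T n : ℤ} : n ∈ window a Z T ↔ 0 ≤ Z + n * a ∧ Z + n * a < T := by
  rw [window, mem_Ico, neg_le, lt_neg, Int.le_ediv_iff_mul_le ha, Int.ediv_lt_iff_lt_mul ha]
  constructor <;> rintro ⟨h1, h2⟩ <;> constructor <;> linarith

lemma card_window (Z : ℤ) {T : ℤ} (hT : 0 ≤ T) :
    (#(window a Z T) : ℤ) = T / a + if Z % a < T % a then 1 else 0 := by
  have : 0 ≤ T / a := Int.ediv_nonneg hT ha.le
  rw [window, Int.card_Ico, neg_sub_neg, Int.ediv_sub_ediv_sub ha, Int.toNat_of_nonneg]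
  split_ifs <;> omega

end window

noncomputable def countBelow (N a β M T : ℤ) : ℕ := #{n ∈ Ico 0 M | (β + n * a) % N < T}

section countBelow

variable {N a β M T : ℤ}

lemma countBelow_eq_sum_window (hN : 0 < N) (ha : 0 < a) (hTN : T ≤ N) :
    countBelow N a β M T =
      ∑ m ∈ Icc (β / N) ((β + M * a) / N), #(Ico 0 M ∩ window a (β - m * N) T) := by
  rw [countBelow, card_eq_sum_card_fiberwise (f := fun n => (β + n * a) / N)
    (t := Icc (β / N) ((β + M * a) / N)) fun n hn => ?_]
  swap
  · simp only [coe_filter, mem_Ico, Set.mem_ofPred_eq, coe_Icc, Set.mem_Icc] at hn ⊢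
    constructor <;> apply Int.ediv_le_ediv hN <;> nlinarith
  refine sum_congr rfl fun m _ => congrArg card ?_
  ext n
  simp only [mem_filter, mem_inter, mem_window ha]
  constructor
  · rintro ⟨⟨hn, hlt⟩, rfl⟩
    have := Int.emod_add_mul_ediv (β + n * a) N
    have := Int.emod_nonneg (β + n * a) hN.ne'
    exact ⟨hn, by linarith, by linarith⟩
  · rintro ⟨hn, h0, hT⟩
    obtain ⟨hq, hr⟩ := (Int.ediv_emod_unique (a := β + n * a) (q := m)
      (r := β - m * N + n * a) hN).2 ⟨by ring, h0, by linarith⟩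
    exact ⟨⟨hn, hr ▸ hT⟩, hq⟩

lemma window_subset_Ico (hN : 0 < N) (ha : 0 < a) (hTN : T ≤ N) {m : ℤ}
    (hlo : β / N < m) (hhi : m < (β + M * a) / N) :
    window a (β - m * N) T ⊆ Ico 0 M := by
  intro n hn
  rw [mem_window ha] at hn
  have : β < m * N := by
    have := Int.lt_ediv_add_one_mul_self β hN
    nlinarith
  have : (m + 1) * N ≤ β + M * a := by
    have := Int.ediv_mul_le (β + M * a) hN.ne'
    nlinarith
  rw [mem_Ico]
  constructor <;> nlinarith

lemma countBelow_le_sum_card_window (hN : 0 < N) (ha : 0 < a) (hTN : T ≤ N) :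
    countBelow N a β M T ≤ ∑ m ∈ Icc (β / N) ((β + M * a) / N), #(window a (β - m * N) T) := by
  rw [countBelow_eq_sum_window hN ha hTN]
  exact sum_le_sum fun m _ => card_le_card inter_subset_right

lemma sum_card_window_le_countBelow (hN : 0 < N) (ha : 0 < a) (hM : 0 ≤ M) (hT : 0 ≤ T)
    (hTN : T ≤ N) :
    ∑ m ∈ Icc (β / N) ((β + M * a) / N), (#(window a (β - m * N) T) : ℤ)
      ≤ countBelow N a β M T + 2 * (T / a + 1) := by
  set S := Icc (β / N) ((β + M * a) / N)
  set E : Finset ℤ := {β / N, (β + M * a) / N}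
  have hES : E ⊆ S := by
    have : β / N ≤ (β + M * a) / N := Int.ediv_le_ediv hN (by nlinarith)
    simp [E, S, insert_subset_iff, this]
  have hinterior : ∑ m ∈ S \ E, (#(window a (β - m * N) T) : ℤ) ≤ countBelow N a β M T := by
    rw [countBelow_eq_sum_window hN ha hTN, Nat.cast_sum]
    refine (sum_le_sum fun m hm => ?_).trans (sum_le_sum_of_subset_of_nonneg sdiff_subset
      fun _ _ _ => Nat.cast_nonneg _)
    simp only [S, E, mem_sdiff, mem_Icc, mem_insert, mem_singleton, not_or] at hm
    rw [inter_eq_right.2 (window_subset_Ico hN ha hTN (by omega) (by omega))]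
  have hboundary : ∑ m ∈ E, (#(window a (β - m * N) T) : ℤ) ≤ 2 * (T / a + 1) := by
    refine (sum_le_card_nsmul _ _ (T / a + 1) fun m _ => ?_).trans ?_
    · rw [card_window ha _ hT]
      split_ifs <;> omega
    · rw [nsmul_eq_mul]
      have : (#E : ℤ) ≤ 2 := by exact_mod_cast card_le_two
      have : 0 ≤ T / a := Int.ediv_nonneg hT ha.le
      nlinarith
  rw [← sum_sdiff hES]
  linarith

lemma card_filter_Icc_eq_countBelow {a' : ℤ} (hdvd : a ∣ N - a') (lo hi t : ℤ) :
    #{m ∈ Icc lo hi | (β - m * N) % a < t} = countBelow a a' (β - hi * a') (hi + 1 - lo) t := by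
  obtain ⟨k, hk⟩ := hdvd
  have hmod : ∀ m, (β - m * N) % a = (β - m * a') % a := fun m => by
    rw [show β - m * N = β - m * a' + a * (-(m * k)) by linear_combination (-m) * hk,
      Int.add_mul_emod_self_left]
  refine card_nbij' (hi - ·) (hi - ·) (fun m hm => ?_) (fun n hn => ?_) (fun m _ => by simp)
    (fun n _ => by simp)
  · simp only [coe_filter, mem_Icc, Set.mem_ofPred_eq] at hm
    simp only [coe_filter, mem_Ico, Set.mem_ofPred_eq]
    refine ⟨by omega, ?_⟩
    rw [show β - hi * a' + (hi - m) * a' = β - m * a' by ring, ← hmod]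
    exact hm.2
  · simp only [coe_filter, mem_Ico, Set.mem_ofPred_eq] at hn
    simp only [coe_filter, mem_Icc, Set.mem_ofPred_eq]
    refine ⟨by omega, ?_⟩
    rw [hmod, show β - (hi - n) * a' = β - hi * a' + n * a' by ring]
    exact hn.2

lemma sum_card_window (ha : 0 < a) (hT : 0 ≤ T) {a' : ℤ} (hdvd : a ∣ N - a') {lo hi : ℤ}
    (hlo : lo ≤ hi + 1) :
    ∑ m ∈ Icc lo hi, (#(window a (β - m * N) T) : ℤ)
      = (hi + 1 - lo) * (T / a) + countBelow a a' (β - hi * a') (hi + 1 - lo) (T % a) := by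
  simp only [card_window ha _ hT, sum_add_distrib, sum_const, Int.card_Icc, sum_boole,
    card_filter_Icc_eq_countBelow hdvd, nsmul_eq_mul, Int.toNat_of_nonneg (sub_nonneg.2 hlo)]

lemma countBelow_renormalize (hN : 0 < N) (ha : 0 < a) (hM : 0 ≤ M) (hT : 0 ≤ T) (hTN : T ≤ N)
    {a' r L : ℤ} (hdvd : a ∣ N - a') (hr : r = (β + M * a) / N) (hL : L = r + 1 - β / N) :
    (countBelow N a β M T : ℤ) ≤ L * (T / a) + countBelow a a' (β - r * a') L (T % a) ∧
      L * (T / a) + countBelow a a' (β - r * a') L (T % a)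
        ≤ countBelow N a β M T + 2 * (T / a + 1) := by
  subst hr hL
  have hlo : β / N ≤ (β + M * a) / N + 1 := by
    have : β / N ≤ (β + M * a) / N := Int.ediv_le_ediv hN (by nlinarith)
    omega
  rw [← sum_card_window ha hT hdvd hlo]
  exact ⟨mod_cast countBelow_le_sum_card_window hN ha hTN,
    sum_card_window_le_countBelow hN ha hM hT hTN⟩

lemma abs_countBelow_sub_sub_le (hN : 0 < N) (ha : 0 < a) (hM : 0 ≤ M) (hT : 0 ≤ T)
    (hTN : T ≤ N) {a' r L : ℤ} (hdvd : a ∣ N - a') (hr : r = (β + M * a) / N)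
    (hL : L = r + 1 - β / N) :
    |((countBelow N a β M T : ℝ) - M * T / N)
        - ((countBelow a a' (β - r * a') L (T % a) : ℝ) - L * (T % a : ℤ) / a)|
      ≤ 4 * (T / a) + 2 := by
  obtain ⟨hlow, hhigh⟩ := countBelow_renormalize hN ha hM hT hTN hdvd hr hL
  set q := T / a
  set count' := countBelow a a' (β - r * a') L (T % a)
  have hNR : (0 : ℝ) < N := by exact_mod_cast hN
  have haR : (0 : ℝ) < a := by exact_mod_cast ha
  have hblocks : |(L : ℝ) - M * a / N| ≤ 2 := by
    have := Int.abs_ediv_sub_ediv_sub_div_lt_one hN β (β + M * a)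
    rw [hL, hr]
    push_cast [add_sub_cancel_left] at this ⊢
    rw [abs_le]
    constructor <;> linarith [abs_lt.1 this]
  have hqT : (q : ℝ) * a + (T % a : ℤ) = T := by exact_mod_cast Int.ediv_mul_add_emod T a
  have hq : (q : ℝ) ≤ T / a := by
    have : (0 : ℝ) ≤ (T % a : ℤ) := by exact_mod_cast Int.emod_nonneg T ha.ne'
    rw [le_div_iff₀ haR]
    linarith
  set D : ℤ := L * q + count' - countBelow N a β M T
  have hD : |(D : ℝ)| ≤ 2 * (T / a) + 2 := by
    have : (0 : ℝ) ≤ D := by exact_mod_cast (by omega : 0 ≤ D)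
    have : (D : ℝ) ≤ 2 * (q + 1) := by exact_mod_cast (by omega : D ≤ 2 * (q + 1))
    rw [abs_le]
    constructor <;> linarith
  have hscaled : |(T : ℝ) / a * (L - M * a / N)| ≤ T / a * 2 := by
    rw [abs_mul, abs_of_nonneg (div_nonneg (by exact_mod_cast hT) haR.le)]
    gcongr
  have hsplit : ((countBelow N a β M T : ℝ) - M * T / N) - ((count' : ℝ) - L * (T % a : ℤ) / a)
      = T / a * (L - M * a / N) - D := by
    simp only [D]
    push_cast
    field_simp
    linear_combination ((N : ℝ) * L) * hqT
  rw [hsplit]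
  linarith [abs_sub (T / a * (L - M * a / N) : ℝ) D]

end countBelow

lemma cfVal_mem_Icc {l : List ℕ} (hl : ∀ c ∈ l, 1 ≤ c) : cfVal l ∈ Set.Icc 0 1 := by
  induction l with
  | nil => simp [cfVal]
  | cons c l ih =>
    obtain ⟨h0, -⟩ := ih fun d hd => hl d (List.mem_cons_of_mem c hd)
    have hc : (1 : ℚ) ≤ c := mod_cast hl c List.mem_cons_self
    rw [cfVal, Set.mem_Icc, div_le_one (by linarith)]
    exact ⟨by positivity, by linarith⟩

lemma cfVal_eq_div_of_cfVal_cons {c : ℕ} {l : List ℕ} (hc : 1 ≤ c) (hl : ∀ d ∈ l, 1 ≤ d)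
    {a N : ℤ} (hN : 0 < N) (h : cfVal (c :: l) = a / N) :
    0 < a ∧ N - c * a ≤ a ∧ cfVal l = ((N - c * a : ℤ) : ℚ) / a := by
  obtain ⟨hθ0, hθ1⟩ := cfVal_mem_Icc hl
  have hc : (1 : ℚ) ≤ c := mod_cast hc
  have hNQ : (0 : ℚ) < N := mod_cast hN
  have hNa : (N : ℚ) = a * (c + cfVal l) := by
    rw [cfVal, eq_div_iff hNQ.ne', one_div, inv_mul_eq_iff_eq_mul₀ (by linarith)] at h
    linarith
  have ha : (0 : ℚ) < a := by nlinarith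
  have ha' : ((N - c * a : ℤ) : ℚ) = a * cfVal l := by push_cast; linarith
  refine ⟨mod_cast ha, ?_, by rw [ha']; field_simp⟩
  exact_mod_cast (ha'.symm ▸ mul_le_of_le_one_right ha.le hθ1 : ((N - c * a : ℤ) : ℚ) ≤ a)

theorem abs_countBelow_sub_le {l : List ℕ} (hl : ∀ c ∈ l, 1 ≤ c) {N a : ℤ} (hN : 0 < N)
    (hcop : IsCoprime a N) (hcf : cfVal l = a / N) {β M T : ℤ} (hM : 0 ≤ M) (hT : 0 ≤ T)
    (hTN : T ≤ N) :
    |(countBelow N a β M T : ℝ) - M * T / N| ≤ 10 * l.sum := by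
  induction l generalizing N a β M T with
  | nil =>
    obtain rfl : a = 0 := by
      rw [cfVal, eq_comm, div_eq_zero_iff] at hcf
      exact_mod_cast hcf.resolve_right (by exact_mod_cast hN.ne')
    obtain rfl : N = 1 := by
      rcases Int.isUnit_iff.1 (isCoprime_zero_left.1 hcop) with h | h <;> omega
    obtain rfl | rfl : T = 0 ∨ T = 1 := by omega
    · simp [countBelow]
    · have : (M.toNat : ℝ) = M := by exact_mod_cast Int.toNat_of_nonneg hM
      simp [countBelow, this]
  | cons c l ih =>
    have hl' : ∀ d ∈ l, 1 ≤ d := fun d hd => hl d (List.mem_cons_of_mem c hd)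
    obtain ⟨ha, ha'a, hcf'⟩ := cfVal_eq_div_of_cfVal_cons (hl c List.mem_cons_self) hl' hN hcf
    have hcop' : IsCoprime (N - c * a) a := by
      simpa [sub_eq_add_neg, mul_comm] using hcop.symm.add_mul_left_left (-c)
    set r := (β + M * a) / N
    set L := r + 1 - β / N
    have hL0 : 0 ≤ L := by
      have : β / N ≤ r := Int.ediv_le_ediv hN (by nlinarith)
      omega
    have hstep := abs_countBelow_sub_sub_le (β := β) hN ha hM hT hTN (a' := N - c * a)
      ⟨c, by ring⟩ rfl rfl
    have IH := ih hl' ha hcop' hcf' (β := β - r * (N - c * a)) hL0 (Int.emod_nonneg T ha.ne')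
      (Int.emod_lt_of_pos T ha).le
    have hTa : (T : ℝ) / a ≤ c + 1 := by
      rw [div_le_iff₀ (by exact_mod_cast ha)]
      have : (T : ℝ) ≤ N := by exact_mod_cast hTN
      have : ((N - c * a : ℤ) : ℝ) ≤ a := by exact_mod_cast ha'a
      push_cast at this
      linarith
    have hc : (1 : ℝ) ≤ c := by exact_mod_cast hl c List.mem_cons_self
    -- the step costs `4 (T / a) + 2 ≤ 4 (c + 1) + 2 ≤ 10 c`
    rw [List.sum_cons, Nat.cast_add]
    linarith [abs_sub_abs_le_abs_sub ((countBelow N a β M T : ℝ) - M * T / N)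
      ((countBelow a (N - c * a) (β - r * (N - c * a)) L (T % a) : ℝ) - L * (T % a : ℤ) / a)]

lemma countBelow_add_card_filter {N a β M K T : ℤ} (hKT : K ≤ T) :
    countBelow N a β M K + #{n ∈ Ico 0 M | K ≤ (β + n * a) % N ∧ (β + n * a) % N < T}
      = countBelow N a β M T := by
  rw [countBelow, countBelow, ← card_filter_add_card_filter_not
    (s := {n ∈ Ico 0 M | (β + n * a) % N < T}) fun n => (β + n * a) % N < K,
    filter_filter, filter_filter]
  congr 2 <;> ext n <;> simp only [mem_filter, not_lt] <;>
    exact and_congr_right fun _ => by omega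

noncomputable def latticePoint (N a n : ℕ) : Fin 2 → ℝ :=
  ![Int.fract ((n : ℝ) / N), Int.fract ((n : ℝ) * a / N)]

lemma latticePoint_mem_box_iff {N : ℕ} (hN : 0 < N) (a : ℕ) (u v : Fin 2 → ℝ) {n : ℕ}
    (hn : n < N) :
    (∀ i, u i ≤ latticePoint N a n i ∧ latticePoint N a n i < v i) ↔
      (⌈u 0 * N⌉ ≤ n ∧ n < ⌈v 0 * N⌉) ∧
        (⌈u 1 * N⌉ ≤ (n * a : ℤ) % N ∧ (n * a : ℤ) % N < ⌈v 1 * N⌉) := by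
  have hNR : (0 : ℝ) < N := by exact_mod_cast hN
  have h0 : latticePoint N a n 0 = ((n : ℤ) : ℝ) / N := by
    rw [latticePoint, Matrix.cons_val_zero, Int.fract_eq_self.2 ⟨by positivity, by
      rw [div_lt_one hNR]; exact_mod_cast hn⟩, Int.cast_natCast]
  have h1 : latticePoint N a n 1 = (((n * a : ℤ) % N : ℤ) : ℝ) / N := by
    rw [latticePoint, Matrix.cons_val_one, Matrix.cons_val_zero,
      show (n : ℝ) * a = ((n * a : ℕ) : ℝ) by push_cast; ring,
      Int.fract_div_natCast_eq_div_natCast_mod]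
    rfl
  rw [Fin.forall_fin_two, h0, h1, le_div_and_div_lt_iff_ceil hNR,
    le_div_and_div_lt_iff_ceil hNR]

lemma natCard_box_add_countBelow {N : ℕ} (hN : 0 < N) (a : ℕ) (u v : Fin 2 → ℝ)
    (huv : ∀ i, 0 ≤ u i ∧ u i ≤ v i ∧ v i ≤ 1) :
    let K := ⌈u 0 * N⌉
    let M := ⌈v 0 * N⌉ - K
    Nat.card {n : ℕ // n < N ∧ ∀ i, u i ≤ latticePoint N a n i ∧ latticePoint N a n i < v i}
        + countBelow N a (K * a) M ⌈u 1 * N⌉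
      = countBelow N a (K * a) M ⌈v 1 * N⌉ := by
  intro K M
  have hNR : (0 : ℝ) < N := by exact_mod_cast hN
  have hK : 0 ≤ K := Int.ceil_nonneg (mul_nonneg (huv 0).1 hNR.le)
  have hL : ⌈v 0 * N⌉ ≤ N := Int.ceil_le.2 (by push_cast; nlinarith [(huv 0).2.2])
  have hu1 : ⌈u 1 * N⌉ ≤ ⌈v 1 * N⌉ := Int.ceil_le_ceil (by nlinarith [(huv 1).2.1])
  have hcard : Nat.card {n : ℕ // n < N ∧ ∀ i, u i ≤ latticePoint N a n i ∧
      latticePoint N a n i < v i} = #{n ∈ range N | ∀ i, u i ≤ latticePoint N a n i ∧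
      latticePoint N a n i < v i} := by
    rw [← Nat.card_eq_finsetCard]
    exact Nat.card_congr (Equiv.subtypeEquivRight fun n => by simp)
  rw [add_comm, ← countBelow_add_card_filter hu1, add_right_inj, hcard]
  refine card_nbij' (fun n => n - K) (fun j => (K + j).toNat) (fun n hn => ?_) (fun j hj => ?_)
    (fun n _ => by simp) (fun j hj => ?_)
  · simp only [coe_filter, mem_range, Set.mem_ofPred_eq] at hn
    rw [latticePoint_mem_box_iff hN a u v hn.1] at hn
    simp only [coe_filter, mem_Ico, Set.mem_ofPred_eq]
    refine ⟨by omega, ?_⟩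
    rw [show K * a + (n - K) * a = n * a by ring]
    exact hn.2.2
  · simp only [coe_filter, mem_Ico, Set.mem_ofPred_eq] at hj
    have hn : (K + j).toNat < N := by omega
    simp only [coe_filter, mem_range, Set.mem_ofPred_eq]
    refine ⟨hn, (latticePoint_mem_box_iff hN a u v hn).2 ?_⟩
    rw [Int.toNat_of_nonneg (by omega)]
    refine ⟨by omega, ?_⟩
    rw [show (K + j) * a = K * a + j * a by ring]
    exact hj.2
  · simp only [coe_filter, mem_Ico, Set.mem_ofPred_eq] at hj
    simp only
    omega

lemma abs_card_box_sub_le {N : ℕ} (hN : 0 < N) {a : ℕ} (hcop : Nat.Coprime a N) {l : List ℕ}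
    (hl : ∀ c ∈ l, 1 ≤ c) (hcf : cfVal l = (a : ℚ) / N) (u v : Fin 2 → ℝ)
    (huv : ∀ i, 0 ≤ u i ∧ u i ≤ v i ∧ v i ≤ 1) :
    |(Nat.card {n : ℕ // n < N ∧ ∀ i, u i ≤ latticePoint N a n i ∧ latticePoint N a n i < v i}
        : ℝ) / N - ∏ i, (v i - u i)| ≤ (20 * l.sum + 2) / N := by
  have hbox := natCard_box_add_countBelow hN a u v huv
  set K := ⌈u 0 * N⌉
  set M := ⌈v 0 * N⌉ - K
  set card := Nat.card {n : ℕ // n < N ∧ ∀ i, u i ≤ latticePoint N a n i ∧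
    latticePoint N a n i < v i}
  set Y := ⌈v 1 * N⌉ - ⌈u 1 * N⌉
  have hNR : (0 : ℝ) < N := by exact_mod_cast hN
  have hceil : ∀ i, 0 ≤ ⌈u i * N⌉ ∧ ⌈u i * N⌉ ≤ ⌈v i * N⌉ ∧ ⌈v i * N⌉ ≤ N := fun i =>
    ⟨Int.ceil_nonneg (mul_nonneg (huv i).1 hNR.le),
      Int.ceil_le_ceil (by nlinarith [(huv i).2.1]),
      Int.ceil_le.2 (by push_cast; nlinarith [(huv i).2.2])⟩
  obtain ⟨hu1, huv1, hv1⟩ := hceil 1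
  have hE : ∀ T : ℤ, 0 ≤ T → T ≤ N →
      |(countBelow N a (K * a) M T : ℝ) - M * T / N| ≤ 10 * l.sum := fun T hT hTN =>
    abs_countBelow_sub_le hl (by exact_mod_cast hN) (Nat.isCoprime_iff_coprime.2 hcop)
      (by rw [hcf, Int.cast_natCast, Int.cast_natCast]) (sub_nonneg.2 (hceil 0).2.1) hT hTN
  have hprod : |(M : ℝ) * Y - (v 0 * N - u 0 * N) * (v 1 * N - u 1 * N)|
      ≤ Y + (v 0 * N - u 0 * N) :=
    abs_mul_sub_mul_le (Int.abs_ceil_sub_ceil_sub_lt_one _ _).le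
      (Int.abs_ceil_sub_ceil_sub_lt_one _ _).le (by exact_mod_cast sub_nonneg.2 huv1)
      (by nlinarith [(huv 0).2.1])
  have hY : (Y : ℝ) + (v 0 * N - u 0 * N) ≤ 2 * N := by
    have : (Y : ℝ) ≤ N := by exact_mod_cast (by omega : Y ≤ N)
    nlinarith [(huv 0).1, (huv 0).2.2]
  have hcount : (card : ℝ)
      = countBelow N a (K * a) M ⌈v 1 * N⌉ - countBelow N a (K * a) M ⌈u 1 * N⌉ := by
    rw [← hbox]; push_cast; ring
  have hsplit : (card : ℝ) / N - ∏ i, (v i - u i)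
      = (((countBelow N a (K * a) M ⌈v 1 * N⌉ : ℝ) - M * ⌈v 1 * N⌉ / N)
          - ((countBelow N a (K * a) M ⌈u 1 * N⌉ : ℝ) - M * ⌈u 1 * N⌉ / N)) / N
        + ((M : ℝ) * Y - (v 0 * N - u 0 * N) * (v 1 * N - u 1 * N)) / N ^ 2 := by
    rw [hcount, Fin.prod_univ_two]
    simp only [Y]
    push_cast
    field_simp
    ring
  rw [hsplit]
  calc _ ≤ (10 * (l.sum : ℝ) + 10 * l.sum) / N + 2 * (N : ℝ) / N ^ 2 := by
        refine (abs_add_le _ _).trans (add_le_add ?_ ?_)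
        · rw [abs_div, abs_of_pos hNR]
          gcongr
          exact (abs_sub _ _).trans (add_le_add (hE _ (hu1.trans huv1) hv1)
            (hE _ hu1 (huv1.trans hv1)))
        · rw [abs_div, abs_of_pos (by positivity : (0 : ℝ) < N ^ 2)]
          gcongr
          exact hprod.trans hY
    _ = (20 * l.sum + 2) / N := by field_simp; ring

theorem stmt17 (B : ℝ)
    (hMoser : ∀ N : ℕ, 2 ≤ N → ∃ a : ℕ, 1 ≤ a ∧ a < N ∧ Nat.Coprime a N ∧
      ∃ l : List ℕ, (∀ c ∈ l, 1 ≤ c) ∧ cfVal l = (a : ℚ) / N ∧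
        (l.sum : ℝ) ≤ B * Real.log N) :
    ∃ C > 0, ∀ N : ℕ, 2 ≤ N → ∃ a : ℕ, 1 ≤ a ∧ a < N ∧ Nat.Coprime a N ∧
      disc (fun n => ![Int.fract ((n : ℝ) / N), Int.fract ((n : ℝ) * a / N)]) N
        ≤ C * Real.log N / N := by
  refine ⟨20 * |B| + 3, by positivity, fun N hN => ?_⟩
  obtain ⟨a, ha1, haN, hcop, l, hl, hcf, hsum⟩ := hMoser N hN
  refine ⟨a, ha1, haN, hcop, ?_⟩
  have hlog : 2 / 3 < Real.log N := by
    have := Real.log_le_log two_pos (by exact_mod_cast hN : (2 : ℝ) ≤ N)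
    linarith [Real.log_two_gt_d9]
  have hbound : (20 * l.sum + 2) / N ≤ (20 * |B| + 3) * Real.log N / N := by
    gcongr
    nlinarith [le_abs_self B]
  refine Real.sSup_le (fun r ⟨u, v, huv, hr⟩ => ?_) (by positivity)
  rw [hr]
  exact (abs_card_box_sub_le (by omega) hcop hl hcf u v huv).trans hbound
end
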